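/- Let 𝐌=(M_1,…,M_k) be a positively irreducible tuple of nonnegative d×d matrices. Then the following are equivalent: (i) there exists C>0 such that C⁻¹ ≤ ‖M_J‖ ≤ C for every nonempty word J with M_J≠0; (ii) there exists C>0 such that C⁻¹ ≤ ‖M_J‖ ≤ C for every nonempty word J with (M_J)_{1,1}>0. -/
import Mathlib


open Filter Real MeasureTheory

/-- The matrix norm `‖A‖ = ∑_{i,j} |A i j|`. -/
noncomputable def mnorm {d : ℕ} (A : Matrix (Fin d) (Fin d) ℝ) : ℝ :=
  ∑ i, ∑ j, |A i j|

/-- The product `M_{j₁} ⋯ M_{jₙ}` along a word `w = j₁⋯jₙ`. -/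
noncomputable def wordProd {d k : ℕ} (M : Fin k → Matrix (Fin d) (Fin d) ℝ)
    (w : List (Fin k)) : Matrix (Fin d) (Fin d) ℝ :=
  (w.map M).prod

/-- `𝐌` has a uniform Lyapunov exponent modulo 0. -/
def HasULE {d k : ℕ} (M : Fin k → Matrix (Fin d) (Fin d) ℝ) : Prop :=
  ∃ C : ℝ, 0 < C ∧ ∃ lam : ℝ, ∀ w : List (Fin k), w ≠ [] →
    wordProd M w = 0 ∨
      (C⁻¹ * Real.exp (lam * w.length) ≤ mnorm (wordProd M w) ∧
        mnorm (wordProd M w) ≤ C * Real.exp (lam * w.length))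

/-- `𝐌` is irreducible: no nonzero proper subspace is invariant under all `M i`. -/
def MatIrred {d k : ℕ} (M : Fin k → Matrix (Fin d) (Fin d) ℝ) : Prop :=
  ∀ V : Submodule ℝ (Fin d → ℝ),
    (∀ i, ∀ v ∈ V, (M i).mulVec v ∈ V) → V = ⊥ ∨ V = ⊤

/-- `𝐌` is positively irreducible. -/
def PosIrred {d k : ℕ} (M : Fin k → Matrix (Fin d) (Fin d) ℝ) : Prop :=
  (∀ i a b, 0 ≤ M i a b) ∧
    ∃ ℓ : ℕ, 1 ≤ ℓ ∧ ∀ a b, 0 < (∑ j ∈ Finset.Icc 1 ℓ, (∑ i, M i) ^ j) a b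

/-- A single nonnegative matrix is positively irreducible:
some partial sum of its powers is entrywise positive. -/
def PosIrredMat {n : ℕ} (A : Matrix (Fin n) (Fin n) ℝ) : Prop :=
  ∃ ℓ : ℕ, 1 ≤ ℓ ∧ ∀ a b, 0 < (∑ j ∈ Finset.Icc 1 ℓ, A ^ j) a b

lemma wordProd_append {d k : ℕ} (M : Fin k → Matrix (Fin d) (Fin d) ℝ) (u v : List (Fin k)) :
    wordProd M (u ++ v) = wordProd M u * wordProd M v := by
  simp [wordProd]

lemma mnorm_nonneg' {d : ℕ} (A : Matrix (Fin d) (Fin d) ℝ) : 0 ≤ mnorm A :=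
  Finset.sum_nonneg fun _ _ => Finset.sum_nonneg fun _ _ => abs_nonneg _

lemma abs_entry_le_mnorm {d : ℕ} (A : Matrix (Fin d) (Fin d) ℝ) (a b : Fin d) :
    |A a b| ≤ mnorm A := by
  calc |A a b| ≤ ∑ j, |A a j| :=
        Finset.single_le_sum (f := fun j => |A a j|) (fun j _ => abs_nonneg _) (Finset.mem_univ b)
  _ ≤ mnorm A :=
        Finset.single_le_sum (f := fun i => ∑ j, |A i j|)
          (fun i _ => Finset.sum_nonneg fun j _ => abs_nonneg _) (Finset.mem_univ a)

lemma mnorm_mul_le {d : ℕ} (A B : Matrix (Fin d) (Fin d) ℝ) :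
    mnorm (A * B) ≤ mnorm A * mnorm B := by
  have h1 : mnorm (A * B) ≤ ∑ i, ∑ c, |A i c| * ∑ j, |B c j| := by
    unfold mnorm
    calc ∑ i, ∑ j, |(A * B) i j| ≤ ∑ i, ∑ j, ∑ c, |A i c| * |B c j| := by
          refine Finset.sum_le_sum fun i _ => Finset.sum_le_sum fun j _ => ?_
          rw [Matrix.mul_apply]
          refine (Finset.abs_sum_le_sum_abs _ _).trans ?_
          exact Finset.sum_le_sum fun c _ => (abs_mul _ _).le
    _ = ∑ i, ∑ c, |A i c| * ∑ j, |B c j| := by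
          refine Finset.sum_congr rfl fun i _ => ?_
          rw [Finset.sum_comm]
          exact Finset.sum_congr rfl fun c _ => (Finset.mul_sum _ _ _).symm
  have h2 : ∑ i, ∑ c, |A i c| * ∑ j, |B c j| ≤ ∑ i, ∑ c, |A i c| * mnorm B := by
    refine Finset.sum_le_sum fun i _ => Finset.sum_le_sum fun c _ => ?_
    refine mul_le_mul_of_nonneg_left ?_ (abs_nonneg _)
    exact Finset.single_le_sum (f := fun c => ∑ j, |B c j|)
      (fun c _ => Finset.sum_nonneg fun j _ => abs_nonneg _) (Finset.mem_univ c)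
  refine (h1.trans h2).trans_eq ?_
  simp [mnorm, Finset.sum_mul]

lemma wordProd_entry_nonneg {d k : ℕ} (M : Fin k → Matrix (Fin d) (Fin d) ℝ)
    (hM : ∀ i a b, 0 ≤ M i a b) :
    ∀ w : List (Fin k), ∀ a b, 0 ≤ wordProd M w a b := by
  intro w
  induction w with
  | nil =>
    intro a b
    by_cases h : a = b <;> simp [wordProd, Matrix.one_apply, h]
  | cons i w ih =>
    intro a b
    have hw : wordProd M (i :: w) = M i * wordProd M w := by simp [wordProd]
    rw [hw, Matrix.mul_apply]
    exact Finset.sum_nonneg fun c _ => mul_nonneg (hM i a c) (ih c b)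

lemma pow_entry_nonneg {d : ℕ} (A : Matrix (Fin d) (Fin d) ℝ) (hA : ∀ a b, 0 ≤ A a b) :
    ∀ n a b, 0 ≤ (A ^ n) a b := by
  intro n
  induction n with
  | zero =>
    intro a b
    by_cases h : a = b <;> simp [Matrix.one_apply, h]
  | succ n ih =>
    intro a b
    rw [pow_succ, Matrix.mul_apply]
    exact Finset.sum_nonneg fun c _ => mul_nonneg (ih a c) (hA c b)

lemma exists_word_of_pow {d k : ℕ} (M : Fin k → Matrix (Fin d) (Fin d) ℝ)
    (hM : ∀ i a b, 0 ≤ M i a b) :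
    ∀ n (a b : Fin d), 0 < ((∑ i, M i) ^ n) a b →
      ∃ w : List (Fin k), w.length = n ∧ 0 < wordProd M w a b := by
  intro n
  induction n with
  | zero =>
    intro a b h
    refine ⟨[], rfl, ?_⟩
    rw [pow_zero, Matrix.one_apply] at h
    by_cases hab : a = b
    · simp [wordProd, Matrix.one_apply, hab]
    · simp [hab] at h
  | succ n ih =>
    intro a b h
    have hAnn : ∀ a b : Fin d, 0 ≤ (∑ i, M i) a b := fun a b => by
      rw [Matrix.sum_apply]; exact Finset.sum_nonneg fun i _ => hM i a b
    rw [pow_succ, Matrix.mul_apply] at h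
    obtain ⟨c, -, hc⟩ := Finset.exists_lt_of_sum_lt (f := fun _ => (0:ℝ)) (by simpa using h)
    have hc1 : 0 < ((∑ i, M i) ^ n) a c := by
      rcases mul_pos_iff.mp hc with ⟨h1, _⟩ | ⟨h1, _⟩
      · exact h1
      · exact absurd (pow_entry_nonneg _ hAnn n a c) (not_le.mpr h1)
    have hc2 : 0 < (∑ i, M i) c b := by
      rcases mul_pos_iff.mp hc with ⟨_, h2⟩ | ⟨_, h2⟩
      · exact h2
      · exact absurd (hAnn c b) (not_le.mpr h2)
    rw [Matrix.sum_apply] at hc2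
    obtain ⟨i, -, hi⟩ := Finset.exists_lt_of_sum_lt (f := fun _ => (0:ℝ)) (by simpa using hc2)
    obtain ⟨w, hlen, hw⟩ := ih a c hc1
    refine ⟨w ++ [i], by simp [hlen], ?_⟩
    rw [wordProd_append]
    have hsingle : wordProd M [i] = M i := by simp [wordProd]
    rw [hsingle, Matrix.mul_apply]
    have : 0 < wordProd M w a c * M i c b := mul_pos hw hi
    refine this.trans_le ?_
    exact Finset.single_le_sum
      (fun x _ => mul_nonneg (wordProd_entry_nonneg M hM w a x) (hM i x b))
      (Finset.mem_univ c)

lemma triple_entry_le {d : ℕ} [NeZero d] (A B C : Matrix (Fin d) (Fin d) ℝ)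
    (hA : ∀ i j, 0 ≤ A i j) (hB : ∀ i j, 0 ≤ B i j) (hC : ∀ i j, 0 ≤ C i j)
    (a b : Fin d) :
    A 0 a * B a b * C b 0 ≤ (A * B * C) 0 0 := by
  have hAB : ∀ i j, 0 ≤ (A * B) i j := fun i j => by
    rw [Matrix.mul_apply]
    exact Finset.sum_nonneg fun c _ => mul_nonneg (hA i c) (hB c j)
  have h1 : A 0 a * B a b ≤ (A * B) 0 b := by
    rw [Matrix.mul_apply]
    exact Finset.single_le_sum (fun c _ => mul_nonneg (hA 0 c) (hB c b)) (Finset.mem_univ a)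
  have h2 : (A * B) 0 b * C b 0 ≤ (A * B * C) 0 0 := by
    rw [Matrix.mul_apply]
    exact Finset.single_le_sum (fun c _ => mul_nonneg (hAB 0 c) (hC c 0)) (Finset.mem_univ b)
  calc A 0 a * B a b * C b 0 ≤ (A * B) 0 b * C b 0 :=
        mul_le_mul_of_nonneg_right h1 (hC b 0)
  _ ≤ _ := h2

theorem stmt12 {d k : ℕ} [NeZero d] [NeZero k]
    (M : Fin k → Matrix (Fin d) (Fin d) ℝ)
    (hpos : PosIrred M) :
    (∃ C : ℝ, 0 < C ∧ ∀ w : List (Fin k), w ≠ [] → wordProd M w ≠ 0 →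
        C⁻¹ ≤ mnorm (wordProd M w) ∧ mnorm (wordProd M w) ≤ C) ↔
    (∃ C : ℝ, 0 < C ∧ ∀ w : List (Fin k), w ≠ [] → 0 < wordProd M w 0 0 →
        C⁻¹ ≤ mnorm (wordProd M w) ∧ mnorm (wordProd M w) ≤ C) := by
  obtain ⟨hMnn, ℓ, hℓ, hP⟩ := hpos
  have hwnn := wordProd_entry_nonneg M hMnn
  constructor
  · rintro ⟨C, hC, h⟩
    exact ⟨C, hC, fun w hw h00 => h w hw (fun h0 => by simp [h0] at h00)⟩
  · rintro ⟨C, hC, h⟩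
    have key : ∀ a b : Fin d, ∃ w : List (Fin k), w ≠ [] ∧ 0 < wordProd M w a b := by
      intro a b
      have hp := hP a b
      have hex : ∃ j ∈ Finset.Icc 1 ℓ, 0 < ((∑ i, M i) ^ j) a b := by
        by_contra hcon
        push_neg at hcon
        have hle : (∑ j ∈ Finset.Icc 1 ℓ, (∑ i, M i) ^ j) a b ≤ 0 := by
          rw [Matrix.sum_apply]
          exact Finset.sum_nonpos fun j hj => hcon j hj
        linarith
      obtain ⟨j, hj, hjpos⟩ := hex
      obtain ⟨w, hlen, hw⟩ := exists_word_of_pow M hMnn j a b hjpos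
      refine ⟨w, ?_, hw⟩
      intro h0
      rw [h0] at hlen
      have : 1 ≤ j := (Finset.mem_Icc.mp hj).1
      simp at hlen
      omega
    choose u hu1 hu2 using fun a => key 0 a
    choose v hv1 hv2 using fun b => key b 0
    have hne : (Finset.univ : Finset (Fin d)).Nonempty := Finset.univ_nonempty
    set δ : ℝ := min (Finset.univ.inf' hne fun a => wordProd M (u a) 0 a)
                     (Finset.univ.inf' hne fun b => wordProd M (v b) b 0) with hδdef
    have hδpos : 0 < δ := by
      apply lt_min
      · exact (Finset.lt_inf'_iff hne).mpr fun a _ => hu2 a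
      · exact (Finset.lt_inf'_iff hne).mpr fun b _ => hv2 b
    have hδu : ∀ a, δ ≤ wordProd M (u a) 0 a := fun a =>
      (min_le_left _ _).trans (Finset.inf'_le _ (Finset.mem_univ a))
    have hδv : ∀ b, δ ≤ wordProd M (v b) b 0 := fun b =>
      (min_le_right _ _).trans (Finset.inf'_le _ (Finset.mem_univ b))
    set B : ℝ := max 1 (max (Finset.univ.sup' hne fun a => mnorm (wordProd M (u a)))
                            (Finset.univ.sup' hne fun b => mnorm (wordProd M (v b)))) with hBdef
    have hB1 : (1:ℝ) ≤ B := le_max_left _ _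
    have hBu : ∀ a, mnorm (wordProd M (u a)) ≤ B := fun a =>
      (Finset.le_sup' (fun a => mnorm (wordProd M (u a))) (Finset.mem_univ a)).trans
        ((le_max_left _ _).trans (le_max_right _ _))
    have hBv : ∀ b, mnorm (wordProd M (v b)) ≤ B := fun b =>
      (Finset.le_sup' (fun b => mnorm (wordProd M (v b))) (Finset.mem_univ b)).trans
        ((le_max_right _ _).trans (le_max_right _ _))
    -- for any word w and entry (a,b) with positive entry, the combined word gives bounds
    have hcomb : ∀ w : List (Fin k), ∀ a b : Fin d, 0 < wordProd M w a b →
        (C⁻¹ ≤ mnorm (wordProd M (u a ++ w ++ v b)) ∧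
          mnorm (wordProd M (u a ++ w ++ v b)) ≤ C) ∧
        δ * wordProd M w a b * δ ≤ mnorm (wordProd M (u a ++ w ++ v b)) := by
      intro w a b hab
      have hWeq : wordProd M (u a ++ w ++ v b) =
          wordProd M (u a) * wordProd M w * wordProd M (v b) := by
        rw [wordProd_append, wordProd_append]
      have htriple := triple_entry_le (wordProd M (u a)) (wordProd M w) (wordProd M (v b))
        (hwnn (u a)) (hwnn w) (hwnn (v b)) a b
      have hδδ : δ * wordProd M w a b * δ ≤
          wordProd M (u a) 0 a * wordProd M w a b * wordProd M (v b) b 0 :=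
        mul_le_mul (mul_le_mul_of_nonneg_right (hδu a) (hwnn w a b)) (hδv b) hδpos.le
          (mul_nonneg (hwnn (u a) 0 a) (hwnn w a b))
      have hent : δ * wordProd M w a b * δ ≤ wordProd M (u a ++ w ++ v b) 0 0 := by
        rw [hWeq]; exact hδδ.trans htriple
      have hlow : δ * wordProd M w a b * δ ≤ mnorm (wordProd M (u a ++ w ++ v b)) :=
        hent.trans ((le_abs_self _).trans (abs_entry_le_mnorm _ 0 0))
      have hWpos : 0 < wordProd M (u a ++ w ++ v b) 0 0 :=
        lt_of_lt_of_le (by positivity) hent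
      have hWne : (u a ++ w ++ v b : List (Fin k)) ≠ [] := by
        simp [hu1 a]
      exact ⟨h _ hWne hWpos, hlow⟩
    -- upper bound on entries of any word
    have hentb : ∀ w : List (Fin k), ∀ a b : Fin d,
        wordProd M w a b ≤ C / δ ^ 2 := by
      intro w a b
      rcases lt_or_ge 0 (wordProd M w a b) with hab | hab
      · obtain ⟨⟨-, hup⟩, hlow⟩ := hcomb w a b hab
        have h1 : δ * wordProd M w a b * δ ≤ C := hlow.trans hup
        rw [le_div_iff₀ (by positivity)]
        nlinarith
      · have : wordProd M w a b = 0 := le_antisymm hab (hwnn w a b)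
        rw [this]
        positivity
    refine ⟨max (B ^ 2 * C) ((d : ℝ) ^ 2 * (C / δ ^ 2)), ?_, ?_⟩
    · exact lt_max_of_lt_left (by positivity)
    · intro w hw hwne
      -- pick a positive entry
      have hab : ∃ a b, 0 < wordProd M w a b := by
        by_contra hcon
        push_neg at hcon
        apply hwne
        ext a b
        simp only [Matrix.zero_apply]
        exact le_antisymm (hcon a b) (hwnn w a b)
      obtain ⟨a, b, hab⟩ := hab
      obtain ⟨⟨hlo, -⟩, -⟩ := hcomb w a b hab
      constructor
      · -- lower bound
        have hprod : mnorm (wordProd M (u a ++ w ++ v b)) ≤ B * mnorm (wordProd M w) * B := by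
          have hWeq : wordProd M (u a ++ w ++ v b) =
              wordProd M (u a) * wordProd M w * wordProd M (v b) := by
            rw [wordProd_append, wordProd_append]
          rw [hWeq]
          calc mnorm (wordProd M (u a) * wordProd M w * wordProd M (v b))
              ≤ mnorm (wordProd M (u a) * wordProd M w) * mnorm (wordProd M (v b)) :=
                mnorm_mul_le _ _
          _ ≤ (mnorm (wordProd M (u a)) * mnorm (wordProd M w)) * mnorm (wordProd M (v b)) :=
                mul_le_mul_of_nonneg_right (mnorm_mul_le _ _) (mnorm_nonneg' _)
          _ ≤ (B * mnorm (wordProd M w)) * mnorm (wordProd M (v b)) :=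
                mul_le_mul_of_nonneg_right
                  (mul_le_mul_of_nonneg_right (hBu a) (mnorm_nonneg' _)) (mnorm_nonneg' _)
          _ ≤ B * mnorm (wordProd M w) * B :=
                mul_le_mul_of_nonneg_left (hBv b)
                  (mul_nonneg (le_trans zero_le_one hB1) (mnorm_nonneg' _))
        have hkey : C⁻¹ ≤ B * mnorm (wordProd M w) * B := hlo.trans hprod
        have hBC : 0 < B ^ 2 * C := by positivity
        have h1 : (B ^ 2 * C)⁻¹ ≤ mnorm (wordProd M w) := by
          rw [inv_eq_one_div, div_le_iff₀ hBC]
          have hCinv : 0 < C⁻¹ := by positivity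
          have := mul_le_mul_of_nonneg_left hkey hC.le
          rw [mul_inv_cancel₀ hC.ne'] at this
          nlinarith [mnorm_nonneg' (wordProd M w)]
        refine le_trans ?_ h1
        exact inv_anti₀ hBC (le_max_left _ _)
      · -- upper bound
        refine le_trans ?_ (le_max_right _ _)
        calc mnorm (wordProd M w) = ∑ i, ∑ j, wordProd M w i j := by
              unfold mnorm
              exact Finset.sum_congr rfl fun i _ =>
                Finset.sum_congr rfl fun j _ => abs_of_nonneg (hwnn w i j)
        _ ≤ ∑ _i : Fin d, ∑ _j : Fin d, C / δ ^ 2 :=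
              Finset.sum_le_sum fun i _ => Finset.sum_le_sum fun j _ => hentb w i j
        _ = (d : ℝ) ^ 2 * (C / δ ^ 2) := by
              simp [Finset.sum_const]
              ring
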